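/- arXiv:1111.5257 — 2 statements merged into one kernel-verified Lean document; each statement's English description precedes it below -/
import Mathlib

section
/- Let d ≥ 1 and let S be the swap operator on ℂ^d ⊗ ℂ^d, i.e., the complex matrix indexed by (Fin d × Fin d) with entries S (i,j) (k,l) = 1 if i = l and j = k, and 0 otherwise. Then for every separable density matrix ρ indexed by (Fin d × Fin d), the real part of trace(S·ρ) is nonnegative. -/
open Matrix ComplexOrder
open scoped Kronecker

/-!
Against the swap operator a product state gives an overlap, `tr (S (A ⊗ B)) = tr (A B)`, and for
positive semidefinite `A`, `B` this is `tr (√A B √A) ≥ 0`. A separable state is a positive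
combination of product states, so its expectation of `S` is a nonnegative sum.
-/

namespace Matrix

variable {n : Type*} [Fintype n] [DecidableEq n]

def swapOperator (n R : Type*) [DecidableEq n] [Zero R] [One R] : Matrix (n × n) (n × n) R :=
  of fun p q => if p.1 = q.2 ∧ p.2 = q.1 then 1 else 0

theorem trace_swapOperator_mul_kronecker {R : Type*} [CommSemiring R] (A B : Matrix n n R) :
    (swapOperator n R * (A ⊗ₖ B)).trace = (A * B).trace := by
  simp only [swapOperator, trace, diag, mul_apply, of_apply, ite_mul, one_mul, zero_mul,
    kroneckerMap_apply, Fintype.sum_prod_type, ite_and, Finset.sum_ite_eq,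
    Finset.mem_univ, if_true]
  exact Finset.sum_comm

open scoped MatrixOrder in
theorem PosSemidef.trace_mul_nonneg {𝕜 : Type*} [RCLike 𝕜] {A B : Matrix n n 𝕜}
    (hA : A.PosSemidef) (hB : B.PosSemidef) : 0 ≤ (A * B).trace := by
  have hsqrt : (CFC.sqrt A * B * CFC.sqrt A).PosSemidef := by
    simpa only [(CFC.sqrt_nonneg A).posSemidef.isHermitian.eq] using
      hB.mul_mul_conjTranspose_same (CFC.sqrt A)
  simpa only [trace_mul_cycle, CFC.sqrt_mul_sqrt_self A hA.nonneg] using hsqrt.trace_nonneg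

end Matrix

theorem swap_nonneg_on_separable_states_general
    {d : ℕ}
    (S : Matrix (Fin d × Fin d) (Fin d × Fin d) ℂ)
    (hS : ∀ p q : Fin d × Fin d,
      S p q = if p.1 = q.2 ∧ p.2 = q.1 then 1 else 0)
    (ρ : Matrix (Fin d × Fin d) (Fin d × Fin d) ℂ)
    (hsep : ∃ (K : ℕ) (p : Fin K → ℝ)
      (ρs : Fin K → Matrix (Fin d) (Fin d) ℂ)
      (σs : Fin K → Matrix (Fin d) (Fin d) ℂ),
      (∀ k, 0 < p k) ∧ (∑ k, p k = 1) ∧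
      (∀ k, (ρs k).PosSemidef ∧ (ρs k).trace = 1) ∧
      (∀ k, (σs k).PosSemidef ∧ (σs k).trace = 1) ∧
      ρ = ∑ k, ((p k : ℂ) • Matrix.kroneckerMap (· * ·) (ρs k) (σs k))) :
    0 ≤ (S * ρ).trace.re := by
  obtain ⟨K, p, ρs, σs, hp, -, hρs, hσs, rfl⟩ := hsep
  obtain rfl : S = swapOperator (Fin d) ℂ := ext hS
  refine (Complex.nonneg_iff.mp ?_).1
  rw [Finset.mul_sum, trace_sum]
  refine Finset.sum_nonneg fun k _ => ?_
  rw [Matrix.mul_smul, trace_smul, trace_swapOperator_mul_kronecker]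
  exact smul_nonneg (mod_cast (hp k).le) ((hρs k).1.trace_mul_nonneg (hσs k).1)

/-- The swap operator has nonnegative expectation value on every separable
density matrix. -/
theorem swap_nonneg_on_separable_states
    {d : ℕ} (hd : 1 ≤ d)
    (S : Matrix (Fin d × Fin d) (Fin d × Fin d) ℂ)
    (hS : ∀ p q : Fin d × Fin d,
      S p q = if p.1 = q.2 ∧ p.2 = q.1 then 1 else 0)
    (ρ : Matrix (Fin d × Fin d) (Fin d × Fin d) ℂ)
    (hsep : ∃ (K : ℕ) (p : Fin K → ℝ)
      (ρs : Fin K → Matrix (Fin d) (Fin d) ℂ)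
      (σs : Fin K → Matrix (Fin d) (Fin d) ℂ),
      (∀ k, 0 < p k) ∧ (∑ k, p k = 1) ∧
      (∀ k, (ρs k).PosSemidef ∧ (ρs k).trace = 1) ∧
      (∀ k, (σs k).PosSemidef ∧ (σs k).trace = 1) ∧
      ρ = ∑ k, ((p k : ℂ) • Matrix.kroneckerMap (· * ·) (ρs k) (σs k))) :
    0 ≤ (S * ρ).trace.re :=
  swap_nonneg_on_separable_states_general S hS ρ hsep
end

section
/- Let A₁, A₂ be n×n complex matrices with A₁² = 1, A₂² = 1, and B₁, B₂ be m×m complex matrices with B₁² = 1, B₂² = 1. Define X = 2•1 + A₁ ⊗ₖ B₁ − A₂ ⊗ₖ B₂, Y = 2•1 + A₁ ⊗ₖ B₂ + A₂ ⊗ₖ B₁, and E_Bell = 2•1 + A₁ ⊗ₖ B₁ + A₁ ⊗ₖ B₂ + A₂ ⊗ₖ B₁ − A₂ ⊗ₖ B₂. Then X·Y = 2 • E_Bell + (A₁·A₂ − A₂·A₁) ⊗ₖ 1 + 1 ⊗ₖ (B₁·B₂ − B₂·B₁), Y·X = 2 • E_Bell − (A₁·A₂ − A₂·A₁) ⊗ₖ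 1 − 1 ⊗ₖ (B₁·B₂ − B₂·B₁), and hence X·Y + Y·X = 4 • E_Bell. (Thus the Bell-CHSH witness is an anticommutator quantumness witness.) -/
open Matrix Kronecker

private lemma sub_kron {n m p q : ℕ} (A B : Matrix (Fin n) (Fin m) ℂ)
    (C : Matrix (Fin p) (Fin q) ℂ) : (A - B) ⊗ₖ C = A ⊗ₖ C - B ⊗ₖ C := by
  ext ⟨i,j⟩ ⟨k,l⟩; simp [Matrix.kroneckerMap, sub_mul]

private lemma kron_sub {n m p q : ℕ} (A : Matrix (Fin n) (Fin m) ℂ)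
    (B C : Matrix (Fin p) (Fin q) ℂ) : A ⊗ₖ (B - C) = A ⊗ₖ B - A ⊗ₖ C := by
  ext ⟨i,j⟩ ⟨k,l⟩; simp [Matrix.kroneckerMap, mul_sub]

/-- With the symmetric choice `X = 2•1 + A₁⊗ₖB₁ − A₂⊗ₖB₂` and
`Y = 2•1 + A₁⊗ₖB₂ + A₂⊗ₖB₁`, one has
`X·Y = 2•E_Bell + [A₁,A₂]⊗ₖ1 + 1⊗ₖ[B₁,B₂]`,
`Y·X = 2•E_Bell − [A₁,A₂]⊗ₖ1 − 1⊗ₖ[B₁,B₂]`, and hence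
`{X,Y} = 4•E_Bell`. -/
theorem bell_is_anticommutator_QW
    {n m : ℕ}
    (A₁ A₂ : Matrix (Fin n) (Fin n) ℂ) (B₁ B₂ : Matrix (Fin m) (Fin m) ℂ)
    (hA₁sq : A₁ * A₁ = 1) (hA₂sq : A₂ * A₂ = 1)
    (hB₁sq : B₁ * B₁ = 1) (hB₂sq : B₂ * B₂ = 1)
    (X Y EBell : Matrix (Fin n × Fin m) (Fin n × Fin m) ℂ)
    (hX : X = (2 : ℂ) • (1 : Matrix (Fin n × Fin m) (Fin n × Fin m) ℂ)
      + A₁ ⊗ₖ B₁ - A₂ ⊗ₖ B₂)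
    (hY : Y = (2 : ℂ) • (1 : Matrix (Fin n × Fin m) (Fin n × Fin m) ℂ)
      + A₁ ⊗ₖ B₂ + A₂ ⊗ₖ B₁)
    (hE : EBell = (2 : ℂ) • (1 : Matrix (Fin n × Fin m) (Fin n × Fin m) ℂ)
      + A₁ ⊗ₖ B₁ + A₁ ⊗ₖ B₂ + A₂ ⊗ₖ B₁ - A₂ ⊗ₖ B₂) :
    X * Y = (2 : ℂ) • EBell
        + (A₁ * A₂ - A₂ * A₁) ⊗ₖ (1 : Matrix (Fin m) (Fin m) ℂ)
        + (1 : Matrix (Fin n) (Fin n) ℂ) ⊗ₖ (B₁ * B₂ - B₂ * B₁) ∧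
    Y * X = (2 : ℂ) • EBell
        - (A₁ * A₂ - A₂ * A₁) ⊗ₖ (1 : Matrix (Fin m) (Fin m) ℂ)
        - (1 : Matrix (Fin n) (Fin n) ℂ) ⊗ₖ (B₁ * B₂ - B₂ * B₁) ∧
    X * Y + Y * X = (4 : ℂ) • EBell := by
  subst hX hY hE
  refine ⟨?_, ?_, ?_⟩ <;>
  · simp only [add_mul, mul_add, sub_mul, mul_sub, smul_mul_assoc, mul_smul_comm,
      one_mul, mul_one, ← Matrix.mul_kronecker_mul, hA₁sq, hA₂sq, hB₁sq, hB₂sq,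
      sub_kron, kron_sub, Matrix.one_kronecker_one,
      smul_add, smul_sub]
    module
end
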